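/- arXiv:2209.02660 — 7 statements merged into one kernel-verified Lean document; each statement's English description precedes it below -/
import Mathlib

section
/- Let G be a finite group having a unique minimal normal subgroup N, suppose N is abelian, C_G(N) = N, and G/N is nonabelian. Then for every non-principal irreducible character λ of N, the inertia group I_G(λ) = {g ∈ G : λ^g = λ} is a proper subgroup of G. -/
/-!
By Schur's lemma an irreducible representation of the abelian group `N` is one-dimensional, so its
character `λ` is a homomorphism. If `λ` is `G`-invariant, its kernel is normal in `G`. As `N` is the
unique minimal normal subgroup, either the kernel contains `N`, so `λ` is principal, or it is
trivial; then `λ` is injective, so `G` centralizes `N`, and `C_G(N) = N` forces `G = N`, against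
`G/N` being nonabelian.
-/

/-- The set of (irreducible complex character) codegrees of a group `G`:
for each irreducible representation `V`, the codegree is `|G : ker V| / dim V`. -/
noncomputable def codegrees (G : Type) [Group G] : Set ℕ :=
  { n | ∃ V : FDRep ℂ G, CategoryTheory.Simple V ∧
      n = (MonoidHom.ker (Representation.asGroupHom V.ρ)).index / Module.finrank ℂ V }

open CategoryTheory Module

namespace Subgroup

variable {G M : Type*} [Group G] [MulOneClass M] {N : Subgroup G} (hN : N.Normal) {χ : N →* M}

theorem normal_map_ker_of_conj_invariant
    (hχ : ∀ (g : G) (x : N), χ ⟨g⁻¹ * x * g, hN.conj_mem' x x.2 g⟩ = χ x) :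
    (χ.ker.map N.subtype).Normal := by
  refine ⟨?_⟩
  rintro _ ⟨x, hx, rfl⟩ g
  refine ⟨⟨g * x * g⁻¹, by simpa using hN.conj_mem' x x.2 g⁻¹⟩, ?_, rfl⟩
  simpa [MonoidHom.mem_ker, ← hχ g⁻¹ x] using hx

theorem centralizer_eq_top_of_conj_invariant (hχinj : Function.Injective χ)
    (hχ : ∀ (g : G) (x : N), χ ⟨g⁻¹ * x * g, hN.conj_mem' x x.2 g⟩ = χ x) :
    centralizer (N : Set G) = ⊤ := by
  refine eq_top_iff.mpr fun g _ => mem_centralizer_iff.mpr fun x hx => ?_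
  have h : g⁻¹ * x * g = x := congrArg Subtype.val (hχinj (hχ g ⟨x, hx⟩))
  simpa [mul_assoc] using congrArg (g * ·) h

end Subgroup

namespace FDRep

variable {k H : Type*} [Field k] [Group H]

/-- For commutative `H`, `W.ρ x` is an endomorphism of `W`, hence a scalar by Schur's lemma. -/
theorem exists_ρ_eq_smul_id [IsAlgClosed k] [IsMulCommutative H] (W : FDRep k H) [Simple W]
    (x : H) : ∃ c : k, W.ρ x = c • LinearMap.id := by
  let f : W ⟶ W := Action.Hom.mk (FGModuleCat.ofHom (W.ρ x)) fun g => by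
    ext v
    change W.ρ x (W.ρ g v) = W.ρ g (W.ρ x v)
    rw [← Module.End.mul_apply, ← map_mul, mul_comm', map_mul, Module.End.mul_apply]
  obtain ⟨c, hc⟩ := endomorphism_simple_eq_smul_id k f
  exact ⟨c, congrArg (fun f : W ⟶ W => f.hom.hom.hom) hc.symm⟩

/-- With a scalar action every linear map is an endomorphism, so `(dim W)² = dim End W = 1`. -/
theorem finrank_eq_one_of_forall_ρ_eq_smul_id [IsAlgClosed k] (W : FDRep k H) [Simple W]
    (hW : ∀ x, ∃ c : k, W.ρ x = c • LinearMap.id) : finrank k W = 1 := by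
  let e : (W ⟶ W) ≃ₗ[k] (W →ₗ[k] W) :=
    { toFun f := f.hom.hom.hom
      map_add' _ _ := rfl
      map_smul' _ _ := rfl
      invFun f := Action.Hom.mk (FGModuleCat.ofHom f) fun g => by
        obtain ⟨c, hc⟩ := hW g
        ext v
        change f (W.ρ g v) = W.ρ g (f v)
        simp [hc]
      left_inv _ := rfl
      right_inv _ := rfl }
  have h := e.finrank_eq
  rw [finrank_endomorphism_simple_eq_one, finrank_linearMap] at h
  simpa using h.symm

theorem finrank_eq_one_of_isMulCommutative [IsAlgClosed k] [IsMulCommutative H]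
    (W : FDRep k H) [Simple W] : finrank k W = 1 :=
  W.finrank_eq_one_of_forall_ρ_eq_smul_id W.exists_ρ_eq_smul_id

theorem character_eq_det_ρ (W : FDRep k H) (hW : finrank k W = 1) (x : H) :
    W.character x = LinearMap.det (W.ρ x) := by
  obtain ⟨c, hc, -⟩ := (W.ρ x).existsUnique_eq_smul_id_of_finrank_eq_one hW
  simp [character, hc, LinearMap.det_smul, hW]

end FDRep

theorem inertia_proper_of_unique_minimal_normal_general
    (G : Type) [Group G] (N : Subgroup G) (hN : N.Normal)
    (huniq : ∀ M : Subgroup G, M.Normal → M ≠ ⊥ → N ≤ M)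
    (hab : ∀ x y : N, x * y = y * x)
    (hcent : Subgroup.centralizer (N : Set G) = N)
    (hquot : ¬ ∀ x y : G ⧸ N, x * y = y * x)
    (W : FDRep ℂ N) (hW : CategoryTheory.Simple W)
    (hnonprin : ∃ x : N, W.character x ≠ 1) :
    ∃ g : G, ∃ x : N,
      W.character ⟨g⁻¹ * ↑x * g, hN.conj_mem' ↑x x.2 g⟩ ≠ W.character x := by
  have : IsMulCommutative N := .of_comm hab
  let χ : N →* ℂ := LinearMap.det.comp W.ρ
  have hχ : ∀ x, W.character x = χ x := W.character_eq_det_ρ W.finrank_eq_one_of_isMulCommutative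
  by_contra! hinv
  simp only [hχ] at hinv hnonprin
  obtain ⟨x, hx⟩ := hnonprin
  by_cases hker : χ.ker.map N.subtype = ⊥
  · have hinj : Function.Injective χ := (MonoidHom.ker_eq_bot_iff χ).mp
      ((Subgroup.map_eq_bot_iff_of_injective _ N.subtype_injective).mp hker)
    have hNtop : N = ⊤ := hcent ▸ Subgroup.centralizer_eq_top_of_conj_invariant hN hinj hinv
    subst hNtop
    exact hquot fun _ _ => QuotientGroup.subsingleton_quotient_top.elim _ _
  · have hxker : (x : G) ∈ χ.ker.map N.subtype :=
      huniq _ (Subgroup.normal_map_ker_of_conj_invariant hN hinv) hker x.2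
    exact hx ((Subgroup.mem_map_iff_mem N.subtype_injective).mp hxker)

/-- Let `G` be a finite group with a unique minimal normal subgroup `N`, with `N` abelian,
`C_G(N) = N`, and `G/N` nonabelian. Then for every non-principal irreducible character `λ`
of `N` (here realized as the character of a simple representation `W`), the inertia group
`I_G(λ)` is proper, i.e. some `g : G` does not fix `λ` under conjugation. -/
theorem inertia_proper_of_unique_minimal_normal
    (G : Type) [Group G] [Finite G] (N : Subgroup G) (hN : N.Normal) (hNbot : N ≠ ⊥)
    (huniq : ∀ M : Subgroup G, M.Normal → M ≠ ⊥ → N ≤ M)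
    (hab : ∀ x y : N, x * y = y * x)
    (hcent : Subgroup.centralizer (N : Set G) = N)
    (hquot : ¬ ∀ x y : G ⧸ N, x * y = y * x)
    (W : FDRep ℂ N) (hW : CategoryTheory.Simple W)
    (hnonprin : ∃ x : N, W.character x ≠ 1) :
    ∃ g : G, ∃ x : N,
      W.character ⟨g⁻¹ * ↑x * g, hN.conj_mem' ↑x x.2 g⟩ ≠ W.character x :=
  inertia_proper_of_unique_minimal_normal_general G N hN huniq hab hcent hquot W hW hnonprin
end

section
/- There is no odd prime power q with q > 4 and no power of two k = 2^f with f ≥ 2 such that q³(q² + q + 1) = k² − 1. -/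
/-- There is no odd prime power `q > 4` and no power of two `k = 2 ^ f` with `f ≥ 2`
such that `q³(q² + q + 1) = k² - 1`. -/
theorem no_solution_psl3_case1_vs_psl2_even :
    ¬ ∃ (q k p m f : ℕ), p.Prime ∧ Odd p ∧ 0 < m ∧ q = p ^ m ∧ 4 < q ∧
      2 ≤ f ∧ k = 2 ^ f ∧ q ^ 3 * (q ^ 2 + q + 1) = k ^ 2 - 1 := by
  rintro ⟨q, k, p, m, f, hp, hodd, hm, hq, hq4, hf, hk, heq⟩
  have hk4 : 4 ≤ k := by
    subst hk
    calc (4:ℕ) = 2 ^ 2 := rfl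
      _ ≤ 2 ^ f := Nat.pow_le_pow_right (by norm_num) hf
  have hks : q ^ 3 * (q ^ 2 + q + 1) + 1 = k ^ 2 := by
    have h16 : 16 ≤ k ^ 2 := by nlinarith
    omega
  have hkpow : k ^ 2 = 2 ^ (2 * f) := by
    rw [hk, ← pow_mul, mul_comm]
  -- M = q^4 + q^2 + 1 - q
  set M := q ^ 4 + q ^ 2 + 1 - q with hMdef
  have hMq : M + q = q ^ 4 + q ^ 2 + 1 := by
    have : q ≤ q ^ 4 + q ^ 2 + 1 := by nlinarith
    omega
  -- factorization (q+1) * M = k^2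
  have key : (q + 1) * M = k ^ 2 := by
    have h1 : (q + 1) * (M + q) = (q + 1) * (q ^ 4 + q ^ 2 + 1) := by rw [hMq]
    have h2 : (q + 1) * (q ^ 4 + q ^ 2 + 1) = (q ^ 3 * (q ^ 2 + q + 1) + 1) + (q + 1) * q := by
      ring
    have h3 : (q + 1) * (M + q) = (q + 1) * M + (q + 1) * q := by ring
    have h4 : (q + 1) * M + (q + 1) * q = k ^ 2 + (q + 1) * q := by
      rw [← h3, h1, h2, hks]
    exact Nat.add_right_cancel h4
  have hfac : (q + 1) * M = 2 ^ (2 * f) := by rw [key, hkpow]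
  -- both factors are powers of 2
  obtain ⟨a, ha, hqa⟩ := (Nat.dvd_prime_pow Nat.prime_two).mp ⟨M, hfac.symm⟩
  obtain ⟨b, hb, hMb⟩ := (Nat.dvd_prime_pow Nat.prime_two).mp
    ⟨q + 1, by rw [mul_comm]; exact hfac.symm⟩
  -- N = q^3 + 2q - (q^2 + 3), so that M = (q+1)*N + 4
  set N := q ^ 3 + 2 * q - (q ^ 2 + 3) with hNdef
  have hNq : N + (q ^ 2 + 3) = q ^ 3 + 2 * q := by
    have : q ^ 2 + 3 ≤ q ^ 3 + 2 * q := by nlinarith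
    omega
  have hN1 : 1 ≤ N := by nlinarith
  have key2 : M = (q + 1) * N + 4 := by
    have h3 : (q + 1) * (N + (q ^ 2 + 3)) = (q + 1) * (q ^ 3 + 2 * q) := by rw [hNq]
    have h4 : (q + 1) * (N + (q ^ 2 + 3)) = (q + 1) * N + (q ^ 3 + q ^ 2 + 3 * q + 3) := by ring
    have h5 : (q + 1) * (q ^ 3 + 2 * q) = q ^ 4 + q ^ 3 + 2 * q ^ 2 + 2 * q := by ring
    have h6 : (q + 1) * N + (q ^ 3 + q ^ 2 + 3 * q + 3) = q ^ 4 + q ^ 3 + 2 * q ^ 2 + 2 * q := by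
      rw [← h4, h3, h5]
    omega
  -- so 2^b = 2^a * N + 4
  have heqn : 2 ^ b = 2 ^ a * N + 4 := by rw [← hMb, key2, hqa]
  have hab : a ≤ b := by
    have h2a2b : (2:ℕ) ^ a ≤ 2 ^ b := by
      rw [← hqa, ← hMb, key2]
      nlinarith
    exact (Nat.pow_le_pow_iff_right (by norm_num)).mp h2a2b
  have hdvd : 2 ^ a ∣ 4 := by
    have h1 : (2:ℕ) ^ a ∣ 2 ^ b := pow_dvd_pow 2 hab
    have h2 : (2:ℕ) ^ a ∣ 2 ^ a * N := dvd_mul_right _ _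
    have h3 : 2 ^ b - 2 ^ a * N = 4 := by rw [heqn]; exact Nat.add_sub_cancel_left _ _
    rw [← h3]
    exact Nat.dvd_sub h1 h2
  have h2a : 2 ^ a ≤ 4 := Nat.le_of_dvd (by norm_num) hdvd
  omega
end

section
/- There is no odd prime power q with q > 4 and q ≡ 1 (mod 3), and no power of two k = 2^f with f ≥ 2, such that q³(q² + q + 1) = 3(k² − 1). -/
/-- There is no odd prime power `q > 4` with `q ≡ 1 (mod 3)` and no power of two `k = 2 ^ f`
with `f ≥ 2` such that `q³(q² + q + 1) = 3(k² - 1)`. -/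
theorem no_solution_psl3_case2_vs_psl2_even :
    ¬ ∃ (q k p m f : ℕ), p.Prime ∧ Odd p ∧ 0 < m ∧ q = p ^ m ∧ 4 < q ∧ q % 3 = 1 ∧
      2 ≤ f ∧ k = 2 ^ f ∧ q ^ 3 * (q ^ 2 + q + 1) = 3 * (k ^ 2 - 1) := by
  rintro ⟨q, k, p, m, f, hp, hop, hm, hq, h4, h3, hf, hk, heq⟩
  obtain ⟨t, ht⟩ : ∃ t, q = 3 * t + 1 := ⟨q / 3, by omega⟩
  have hL : q ^ 3 * (q ^ 2 + q + 1) =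
      9 * ((9 * t ^ 3 + 9 * t ^ 2 + 3 * t) * (3 * t ^ 2 + 3 * t + 1) + t ^ 2 + t) + 3 := by
    subst ht; ring
  have hk2 : k ^ 2 = 4 ^ f := by
    subst hk
    rw [← pow_mul, mul_comm, pow_mul]; norm_num
  have hmod : 4 ^ f % 3 = 1 := by
    rw [Nat.pow_mod]; norm_num
  rw [hL, hk2] at heq
  omega
end

section
/- There is no odd prime power q with q > 4 and no power of two k = 2^f with f ≥ 2 such that q³(q² − q + 1) = k² − 1. -/
/-- There is no odd prime power `q > 4` and no power of two `k = 2 ^ f` with `f ≥ 2`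
such that `q³(q² - q + 1) = k² - 1`. -/
theorem no_solution_psu3_case1_vs_psl2_even :
    ¬ ∃ (q k p m f : ℕ), p.Prime ∧ Odd p ∧ 0 < m ∧ q = p ^ m ∧ 4 < q ∧
      2 ≤ f ∧ k = 2 ^ f ∧ q ^ 3 * (q ^ 2 - q + 1) = k ^ 2 - 1 := by
  rintro ⟨q, k, p, m, f, hp, hop, hm, hq, hq4, hf, hk, heq⟩
  have hqodd : Odd q := hq ▸ hop.pow
  have hle : q ≤ q ^ 2 := by nlinarith
  have hk1 : 1 ≤ k ^ 2 := by
    have : 0 < k := hk ▸ pow_pos (by norm_num) f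
    exact Nat.one_le_pow 2 k this
  have hk8 : (8 : ℕ) ∣ k ^ 2 := by
    rw [hk, ← pow_mul]
    exact (show (2:ℕ)^3 ∣ 2 ^ (f * 2) from pow_dvd_pow 2 (by omega))
  -- additive form of the equation
  have e1 : q ^ 3 * (q ^ 2 - q + 1) + q ^ 4 = q ^ 3 * (q ^ 2 + 1) := by
    have h : q ^ 2 - q + 1 + q = q ^ 2 + 1 := by omega
    calc q ^ 3 * (q ^ 2 - q + 1) + q ^ 4 = q ^ 3 * ((q ^ 2 - q + 1) + q) := by ring
      _ = q ^ 3 * (q ^ 2 + 1) := by rw [h]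
  have heq2 : q ^ 3 * (q ^ 2 + 1) + 1 = k ^ 2 + q ^ 4 := by
    have := e1
    set c := q ^ 3 * (q ^ 2 - q + 1) with hc
    set a := q ^ 3 * (q ^ 2 + 1) with ha
    set b := q ^ 4 with hb
    set kk := k ^ 2 with hkk
    omega
  -- pass to ZMod 8
  have hz : ((q : ZMod 8)) ^ 3 * ((q : ZMod 8) ^ 2 + 1) + 1 = (k : ZMod 8) ^ 2 + (q : ZMod 8) ^ 4 := by
    have := congrArg (fun n : ℕ => (n : ZMod 8)) heq2
    push_cast at this
    exact this
  have hk0 : (k : ZMod 8) ^ 2 = 0 := by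
    have : ((k ^ 2 : ℕ) : ZMod 8) = 0 := (ZMod.natCast_eq_zero_iff _ _).mpr hk8
    push_cast at this
    exact this
  rw [hk0, zero_add] at hz
  -- q mod 8 is odd
  have hq8 : ((q % 8 : ℕ) : ZMod 8) = (q : ZMod 8) := ZMod.natCast_mod q 8 ▸ rfl
  have hodd : q % 2 = 1 := Nat.odd_iff.mp hqodd
  have hlt : q % 8 < 8 := Nat.mod_lt _ (by norm_num)
  have hcases : q % 8 = 1 ∨ q % 8 = 3 ∨ q % 8 = 5 ∨ q % 8 = 7 := by omega
  rw [← hq8] at hz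
  rcases hcases with h | h | h | h <;> rw [h] at hz <;> revert hz <;> decide
end

section
/- There is no odd prime power q with q > 4 and q ≡ −1 (mod 3), and no power of two k = 2^f with f ≥ 2, such that q³(q² − q + 1) = 3(k² − 1). -/
/-- There is no odd prime power `q > 4` with `q ≡ -1 (mod 3)` and no power of two `k = 2 ^ f`
with `f ≥ 2` such that `q³(q² - q + 1) = 3(k² - 1)`. -/
theorem no_solution_psu3_case2_vs_psl2_even :
    ¬ ∃ (q k p m f : ℕ), p.Prime ∧ Odd p ∧ 0 < m ∧ q = p ^ m ∧ 4 < q ∧ q % 3 = 2 ∧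
      2 ≤ f ∧ k = 2 ^ f ∧ q ^ 3 * (q ^ 2 - q + 1) = 3 * (k ^ 2 - 1) := by
  rintro ⟨q, k, p, m, f, hp, hop, hm, hq, h4, h3, hf, hk, heq⟩
  have hqq : q ≤ q ^ 2 := by nlinarith
  have hk1 : 1 ≤ k ^ 2 := by
    subst hk
    have : 0 < (2 ^ f) ^ 2 := by positivity
    omega
  have heqZ : (q : ℤ) ^ 3 * ((q : ℤ) ^ 2 - q + 1) = 3 * ((k : ℤ) ^ 2 - 1) := by
    zify [hqq, hk1] at heq; linarith
  have h9 : ((q : ZMod 9)) ^ 3 * ((q : ZMod 9) ^ 2 - (q : ZMod 9) + 1)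
      = 3 * ((k : ZMod 9) ^ 2 - 1) := by
    have := congrArg (Int.cast : ℤ → ZMod 9) heqZ
    push_cast at this
    exact this
  have hk9 : (k : ZMod 9) ^ 2 = (4 : ZMod 9) ^ f := by
    subst hk
    push_cast
    rw [← pow_mul, mul_comm, pow_mul]
    norm_num
  have h4f : (4 : ZMod 9) ^ f = (4 : ZMod 9) ^ (f % 3) := by
    conv_lhs => rw [← Nat.div_add_mod f 3]
    rw [pow_add, pow_mul]
    rw [show ((4 : ZMod 9) ^ 3) = 1 from by decide, one_pow, one_mul]
  have hqcast : (q : ZMod 9) = ((q % 9 : ℕ) : ZMod 9) := by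
    rw [ZMod.natCast_mod]
  rw [hk9, h4f, hqcast] at h9
  have hq9 : q % 9 = 2 ∨ q % 9 = 5 ∨ q % 9 = 8 := by omega
  have hf3 : f % 3 = 0 ∨ f % 3 = 1 ∨ f % 3 = 2 := by omega
  rcases hq9 with h | h | h <;> rcases hf3 with h' | h' | h' <;>
    rw [h, h'] at h9 <;> revert h9 <;> decide
end

section
/- There are no prime powers q and f with q > 4, q ≡ 1 (mod 3), f > 4, and f ≢ −1 (mod 3), such that both 3·f³(f+1)²(f−1) = q³(q+1)(q−1)² and 3·f³(f+1)(f−1) = q³(q−1)² hold. -/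
/-- There are no prime powers `q > 4` with `q ≡ 1 (mod 3)` and `f > 4` with `f ≢ -1 (mod 3)`
such that both `3f³(f+1)²(f-1) = q³(q+1)(q-1)²` and `3f³(f+1)(f-1) = q³(q-1)²`. -/
theorem no_solution_psl3_case2_vs_psu3_case1 :
    ¬ ∃ (q f : ℕ), IsPrimePow q ∧ 4 < q ∧ q % 3 = 1 ∧
      IsPrimePow f ∧ 4 < f ∧ f % 3 ≠ 2 ∧
      3 * f ^ 3 * (f + 1) ^ 2 * (f - 1) = q ^ 3 * (q + 1) * (q - 1) ^ 2 ∧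
      3 * f ^ 3 * (f + 1) * (f - 1) = q ^ 3 * (q - 1) ^ 2 := by
  rintro ⟨q, f, _, hq, _, _, hf, _, h1, h2⟩
  have key : (f + 1) * (q ^ 3 * (q - 1) ^ 2) = (q + 1) * (q ^ 3 * (q - 1) ^ 2) := by
    calc (f + 1) * (q ^ 3 * (q - 1) ^ 2) = 3 * f ^ 3 * (f + 1) ^ 2 * (f - 1) := by
          rw [← h2]; ring
      _ = q ^ 3 * (q + 1) * (q - 1) ^ 2 := h1
      _ = (q + 1) * (q ^ 3 * (q - 1) ^ 2) := by ring
  have hq1 : 0 < q - 1 := by omega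
  have hpos : 0 < q ^ 3 * (q - 1) ^ 2 := by positivity
  have hfq : f = q := by
    have := Nat.eq_of_mul_eq_mul_right hpos key
    omega
  subst hfq
  -- h2 : 3 * f^3 * (f+1) * (f-1) = f^3 * (f-1)^2
  have hf3 : 0 < f ^ 3 := by positivity
  have h3 : 3 * (f + 1) * (f - 1) = (f - 1) * (f - 1) := by
    have : (3 * (f + 1) * (f - 1)) * f ^ 3 = ((f - 1) * (f - 1)) * f ^ 3 := by
      rw [← pow_two]; linarith [h2]
    exact Nat.eq_of_mul_eq_mul_right hf3 this
  have h4 : 3 * (f + 1) = f - 1 := Nat.eq_of_mul_eq_mul_right (by omega) h3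
  omega
end

section
/- There is no integer f ≥ 1 and no odd prime power q > 4 such that, setting s = 2^{2f+1} and r = 2^f, the three equalities s²(s + 2r + 1) = q³(q+1)(q−1)², s²(s − 1) = (q² + q + 1)(q+1)(q−1)², and s²(s − 2r + 1) = q²(q+1)(q−1)² all hold. -/
/-- There is no `f ≥ 1` and odd prime power `q > 4` such that, with `s = 2^(2f+1)` and
`r = 2^f`, the codegree equations `s²(s + 2r + 1) = q³(q+1)(q-1)²`,
`s²(s - 1) = (q² + q + 1)(q+1)(q-1)²`, and `s²(s - 2r + 1) = q²(q+1)(q-1)²` all hold. -/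
theorem no_solution_suzuki_vs_psl3 :
    ¬ ∃ (f q p m : ℕ), 1 ≤ f ∧ p.Prime ∧ Odd p ∧ 0 < m ∧ q = p ^ m ∧ 4 < q ∧
      (2 ^ (2 * f + 1)) ^ 2 * (2 ^ (2 * f + 1) + 2 * 2 ^ f + 1)
          = q ^ 3 * (q + 1) * (q - 1) ^ 2 ∧
      (2 ^ (2 * f + 1)) ^ 2 * (2 ^ (2 * f + 1) - 1)
          = (q ^ 2 + q + 1) * (q + 1) * (q - 1) ^ 2 ∧
      (2 ^ (2 * f + 1)) ^ 2 * (2 ^ (2 * f + 1) - 2 * 2 ^ f + 1)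
          = q ^ 2 * (q + 1) * (q - 1) ^ 2 := by
  rintro ⟨f, q, p, m, hf, hp, hodd, hm, hq, hq4, h1, h2, h3⟩
  set r := 2 ^ f with hr
  have hr2 : 2 ≤ r := by
    calc 2 = 2 ^ 1 := (pow_one 2).symm
    _ ≤ 2 ^ f := Nat.pow_le_pow_right (by norm_num) hf
  have hs : 2 ^ (2 * f + 1) = 2 * r ^ 2 := by
    rw [hr]; ring
  rw [hs] at h1 h3
  have key : (2 * r ^ 2) ^ 2 * (2 * r ^ 2 + 2 * r + 1)
      = (2 * r ^ 2) ^ 2 * (q * (2 * r ^ 2 - 2 * r + 1)) := by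
    calc (2 * r ^ 2) ^ 2 * (2 * r ^ 2 + 2 * r + 1)
        = q ^ 3 * (q + 1) * (q - 1) ^ 2 := h1
      _ = q * (q ^ 2 * (q + 1) * (q - 1) ^ 2) := by ring
      _ = q * ((2 * r ^ 2) ^ 2 * (2 * r ^ 2 - 2 * r + 1)) := by rw [h3]
      _ = (2 * r ^ 2) ^ 2 * (q * (2 * r ^ 2 - 2 * r + 1)) := by ring
  have hpos : 0 < (2 * r ^ 2) ^ 2 := by positivity
  have hX := Nat.eq_of_mul_eq_mul_left hpos key
  have h2r : 2 * r ≤ 2 * r ^ 2 := by nlinarith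
  obtain ⟨c, hc⟩ : ∃ c, 2 * r ^ 2 = 2 * r + c := ⟨2 * r ^ 2 - 2 * r, by omega⟩
  rw [hc] at hX
  have hsub : 2 * r + c - 2 * r = c := by omega
  rw [hsub] at hX
  have hc2 : 2 * r ≤ c := by nlinarith
  have hq5 : 5 ≤ q := hq4
  have h5 : 5 * (c + 1) ≤ q * (c + 1) := Nat.mul_le_mul_right _ hq5
  linarith [hX, h5, hc2, hr2]
end
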